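/- arXiv:math-ph/0512042 — 2 statements merged into one kernel-verified Lean document; each statement's English description precedes it below -/
import Mathlib

section
/- Let H and H₁ be complex Hilbert spaces and let ι : B(H) → B(H ⊕ H₁) be the degenerate representation ι(B)(η ⊕ η₁) = (Bη) ⊕ 0. Let Γ : B(H) → B(H ⊕ H₁) be a bounded linear map that is Hermitian (Γ(B*) = Γ(B)* for all B) and conditionally completely positive with respect to ι. Fix a unit vector η₀ ∈ H and any w ∈ H₁, and set v := η₀ ⊕ w ∈ H ⊕ H₁. Then there exists a bounded operator K on H ⊕ H₁ such that the map Φ(B) := Γ(B) + ι(B)∘K + K*∘ι(B) is completely positive and satisfies Φ(|η'⟩⟨η₀|) v = 0 for every η' ∈ H, where |η'⟩⟨η₀| denotes the rank-one operator η ↦ ⟨η₀, η⟩ η'. -/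
/-!
Write `ι(B) = V B V*` with `V : H → H ⊕ H₁` the isometric inclusion, let
`c = ⟪v, Γ(|η₀⟩⟨η₀|) v⟫` (real because `Γ` is Hermitian) and choose `K` with
`K* = (c/2) V V* − J V*`, where `J y = Γ(|y⟩⟨η₀|) v`.
Given `B₁, …, Bₙ` and `ζ₁, …, ζₙ`, put `x = ∑ Bₖ V* ζₖ`. Adjoining `B₀ = |x⟩⟨η₀|` and `ζ₀ = −v`
gives a family with `∑ ι(Bₖ) ζₖ = 0`, and the border terms it adds to the `Γ`-sum,
`c ‖x‖² − 2 Re ∑ ⟪J (Bₗ* x), ζₗ⟫`, are exactly what the two `K`-terms add to the `Φ`-sum of the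
original family. So conditional positivity of `Γ` yields complete positivity of `Φ`.
The normalisation `Φ(|η'⟩⟨η₀|) v = 0` is a direct computation from `V* v = η₀`.
-/

open ComplexOrder

local notation "⟪" x ", " y "⟫" => @inner ℂ _ _ x y

open ContinuousLinearMap ComplexConjugate
open InnerProductSpace (rankOne rankOne_apply adjoint_rankOne rankOne_comp comp_rankOne
  rankOne_comp_rankOne)

namespace WithLp

variable {𝕜 E F : Type*} [RCLike 𝕜]
  [NormedAddCommGroup E] [InnerProductSpace 𝕜 E] [NormedAddCommGroup F] [InnerProductSpace 𝕜 F]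

variable (𝕜 E F) in
noncomputable def inlL : E →L[𝕜] WithLp 2 (E × F) :=
  (prodContinuousLinearEquiv 2 𝕜 E F).symm.toContinuousLinearMap ∘L
    ContinuousLinearMap.inl 𝕜 E F

@[simp] lemma inlL_apply (x : E) : inlL 𝕜 E F x = toLp 2 (x, 0) := rfl

lemma adjoint_inlL [CompleteSpace E] [CompleteSpace F] :
    adjoint (inlL 𝕜 E F) = ContinuousLinearMap.fst 𝕜 E F ∘L
      (prodContinuousLinearEquiv 2 𝕜 E F).toContinuousLinearMap := by
  symm
  rw [eq_adjoint_iff]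
  intro u x
  simp

@[simp] lemma adjoint_inlL_apply [CompleteSpace E] [CompleteSpace F] (u : WithLp 2 (E × F)) :
    adjoint (inlL 𝕜 E F) u = (ofLp u).1 := by
  rw [adjoint_inlL]
  rfl

end WithLp

namespace ConditionallyCompletelyPositive

variable {E F : Type*} [NormedAddCommGroup E] [InnerProductSpace ℂ E] [CompleteSpace E]
  [NormedAddCommGroup F] [InnerProductSpace ℂ F]

noncomputable def cpForm (Φ : (E →L[ℂ] E) → (F →L[ℂ] F)) {n : ℕ} (B : Fin n → E →L[ℂ] E)
    (ζ : Fin n → F) : ℂ :=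
  ∑ k, ∑ l, ⟪ζ k, Φ (adjoint (B k) * B l) (ζ l)⟫

lemma cpForm_add (Φ Ψ : (E →L[ℂ] E) → (F →L[ℂ] F)) {n : ℕ} (B : Fin n → E →L[ℂ] E)
    (ζ : Fin n → F) :
    cpForm (fun X => Φ X + Ψ X) B ζ = cpForm Φ B ζ + cpForm Ψ B ζ := by
  simp only [cpForm, add_apply, inner_add_right, Finset.sum_add_distrib]

lemma cpForm_cons (Φ : (E →L[ℂ] E) → (F →L[ℂ] F)) {n : ℕ} (B₀ : E →L[ℂ] E)
    (B : Fin n → E →L[ℂ] E) (ζ₀ : F) (ζ : Fin n → F) :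
    cpForm Φ (Fin.cons B₀ B) (Fin.cons ζ₀ ζ) =
      ⟪ζ₀, Φ (adjoint B₀ * B₀) ζ₀⟫ + ∑ l, ⟪ζ₀, Φ (adjoint B₀ * B l) (ζ l)⟫ +
        ∑ k, ⟪ζ k, Φ (adjoint (B k) * B₀) ζ₀⟫ + cpForm Φ B ζ := by
  simp only [cpForm, Fin.sum_univ_succ, Fin.cons_zero, Fin.cons_succ, Finset.sum_add_distrib]
  ring

section Compression

variable [CompleteSpace F] (V : E →L[ℂ] F) (K : F →L[ℂ] F) {n : ℕ} (B : Fin n → E →L[ℂ] E)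
  (ζ : Fin n → F)

lemma inner_compress_apply (ξ₁ ξ₂ : F) (A C : E →L[ℂ] E) :
    ⟪ξ₁, V (adjoint A (C (adjoint V ξ₂)))⟫ = ⟪A (adjoint V ξ₁), C (adjoint V ξ₂)⟫ := by
  rw [← adjoint_inner_left, adjoint_inner_right]

lemma cpForm_compress_comp :
    cpForm (fun X => (V ∘L X ∘L adjoint V) ∘L K) B ζ =
      ∑ l, ⟪adjoint K (V (adjoint (B l) (∑ k, B k (adjoint V (ζ k))))), ζ l⟫ := by
  rw [cpForm, Finset.sum_comm]
  refine Finset.sum_congr rfl fun l _ => ?_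
  simp only [comp_apply, mul_apply_eq_comp, inner_compress_apply, ← sum_inner]
  rw [← adjoint_inner_left, adjoint_inner_right, ← adjoint_inner_left]

lemma cpForm_adjoint_comp_compress :
    cpForm (fun X => adjoint K ∘L (V ∘L X ∘L adjoint V)) B ζ =
      ∑ k, ⟪ζ k, adjoint K (V (adjoint (B k) (∑ l, B l (adjoint V (ζ l)))))⟫ := by
  refine Finset.sum_congr rfl fun k _ => ?_
  simp only [comp_apply, mul_apply_eq_comp, adjoint_inner_right, inner_compress_apply,
    ← inner_sum]
  rw [← adjoint_inner_right, adjoint_inner_left]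

lemma sum_compress_cons_rankOne_eq_zero {η₀ : E} (hη₀ : ‖η₀‖ = 1) {v : F}
    (hv : adjoint V v = η₀) :
    ∑ k, (V ∘L (Fin.cons (rankOne ℂ (∑ k, B k (adjoint V (ζ k))) η₀) B : Fin (n + 1) → _) k
      ∘L adjoint V) ((Fin.cons (-v) ζ : Fin (n + 1) → F) k) = 0 := by
  simp [Fin.sum_univ_succ, hv, hη₀]

end Compression

section Correction

variable (Γ : (E →L[ℂ] E) →L[ℂ] (F →L[ℂ] F)) (η₀ : E) (v : F)

noncomputable def rankOneEval : E →L[ℂ] F :=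
  ContinuousLinearMap.apply ℂ F v ∘L Γ ∘L (rankOne ℂ).flip η₀

lemma rankOneEval_apply (y : E) : rankOneEval Γ η₀ v y = Γ (rankOne ℂ y η₀) v := rfl

variable [CompleteSpace F]

noncomputable def correction (V : E →L[ℂ] F) : F →L[ℂ] F :=
  adjoint ((⟪v, Γ (rankOne ℂ η₀ η₀) v⟫ / 2) • (V ∘L adjoint V) - rankOneEval Γ η₀ v ∘L adjoint V)

lemma adjoint_correction_apply {V : E →L[ℂ] F} (hV : adjoint V ∘L V = .id ℂ E) (y : E) :
    adjoint (correction Γ η₀ v V) (V y) =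
      (⟪v, Γ (rankOne ℂ η₀ η₀) v⟫ / 2) • V y - Γ (rankOne ℂ y η₀) v := by
  have hVy : adjoint V (V y) = y := congr($hV y)
  simp [correction, hVy, rankOneEval_apply]

variable {Γ} (hΓ : ∀ B, Γ (adjoint B) = adjoint (Γ B))
include hΓ

lemma conj_inner_rankOne_self :
    conj ⟪v, Γ (rankOne ℂ η₀ η₀) v⟫ = ⟪v, Γ (rankOne ℂ η₀ η₀) v⟫ := by
  rw [inner_conj_symm, ← adjoint_inner_right, ← hΓ, adjoint_rankOne]

lemma inner_adjoint_rankOne_mul (x : E) (B : E →L[ℂ] E) (ζ : F) :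
    ⟪v, Γ (adjoint (rankOne ℂ x η₀) * B) ζ⟫ = ⟪Γ (rankOne ℂ (adjoint B x) η₀) v, ζ⟫ := by
  rw [adjoint_rankOne, mul_def, rankOne_comp, ← adjoint_rankOne, hΓ, adjoint_inner_right]

lemma cpForm_perturbed_eq_cpForm_cons {V : E →L[ℂ] F} (hV : adjoint V ∘L V = .id ℂ E) {n : ℕ}
    (B : Fin n → E →L[ℂ] E) (ζ : Fin n → F) :
    cpForm (fun X => Γ X + (V ∘L X ∘L adjoint V) ∘L correction Γ η₀ v V
        + adjoint (correction Γ η₀ v V) ∘L (V ∘L X ∘L adjoint V)) B ζ =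
      cpForm Γ (Fin.cons (rankOne ℂ (∑ k, B k (adjoint V (ζ k))) η₀) B) (Fin.cons (-v) ζ) := by
  rw [cpForm_add, cpForm_add, cpForm_compress_comp, cpForm_adjoint_comp_compress, cpForm_cons]
  simp only [adjoint_correction_apply Γ η₀ v hV]
  set x := ∑ k, B k (adjoint V (ζ k))
  set c := ⟪v, Γ (rankOne ℂ η₀ η₀) v⟫
  have hc : conj c = c := conj_inner_rankOne_self η₀ v hΓ
  have hx_left : ∑ l, ⟪adjoint (B l) x, adjoint V (ζ l)⟫ = ⟪x, x⟫ := by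
    simp only [adjoint_inner_left]
    rw [← inner_sum]
  have hx_right : ∑ k, ⟪adjoint V (ζ k), adjoint (B k) x⟫ = ⟪x, x⟫ := by
    simp only [adjoint_inner_right]
    rw [← sum_inner]
  have h00 : ⟪-v, Γ (adjoint (rankOne ℂ x η₀) * rankOne ℂ x η₀) (-v)⟫ = ⟪x, x⟫ * c := by
    rw [adjoint_rankOne, mul_def, rankOne_comp_rankOne, map_smul, smul_apply, inner_smul_right,
      map_neg, inner_neg_neg]
  have h0l (l : Fin n) : ⟪-v, Γ (adjoint (rankOne ℂ x η₀) * B l) (ζ l)⟫ =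
      -⟪Γ (rankOne ℂ (adjoint (B l) x) η₀) v, ζ l⟫ := by
    rw [inner_neg_left, inner_adjoint_rankOne_mul η₀ v hΓ]
  have hk0 (k : Fin n) : ⟪ζ k, Γ (adjoint (B k) * rankOne ℂ x η₀) (-v)⟫ =
      -⟪ζ k, Γ (rankOne ℂ (adjoint (B k) x) η₀) v⟫ := by
    rw [mul_def, comp_rankOne, map_neg, inner_neg_right]
  simp only [inner_sub_left, inner_sub_right, inner_smul_left, inner_smul_right, map_div₀,
    Complex.conj_ofNat, ← adjoint_inner_left V, ← adjoint_inner_right V, Finset.sum_sub_distrib,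
    ← Finset.mul_sum, hx_left, hx_right, hc, h00, h0l, hk0, Finset.sum_neg_distrib]
  ring

lemma perturbed_rankOne_apply_eq_zero {V : E →L[ℂ] F} (hV : adjoint V ∘L V = .id ℂ E)
    (hv : adjoint V v = η₀) (hη₀ : ‖η₀‖ = 1) (η' : E) :
    (Γ (rankOne ℂ η' η₀) + (V ∘L rankOne ℂ η' η₀ ∘L adjoint V) ∘L correction Γ η₀ v V
        + adjoint (correction Γ η₀ v V) ∘L (V ∘L rankOne ℂ η' η₀ ∘L adjoint V)) v = 0 := by
  set c := ⟪v, Γ (rankOne ℂ η₀ η₀) v⟫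
  have hη₀η₀ : ⟪η₀, η₀⟫ = 1 := inner_self_eq_one_of_norm_eq_one hη₀
  have hVη₀ : ⟪V η₀, v⟫ = 1 := by rw [← adjoint_inner_right, hv, hη₀η₀]
  have hKv : ⟪η₀, adjoint V (correction Γ η₀ v V v)⟫ = -(c / 2) := by
    rw [adjoint_inner_right, ← adjoint_inner_left, adjoint_correction_apply Γ η₀ v hV,
      inner_sub_left, inner_smul_left, hVη₀, ← inner_conj_symm (Γ (rankOne ℂ η₀ η₀) v) v,
      map_div₀, Complex.conj_ofNat, conj_inner_rankOne_self η₀ v hΓ]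
    ring
  simp only [add_apply, comp_apply, rankOne_apply, hv, hη₀η₀, one_smul, hKv, map_smul,
    adjoint_correction_apply Γ η₀ v hV]
  module

end Correction

end ConditionallyCompletelyPositive

open ConditionallyCompletelyPositive

/-- A Hermitian, conditionally completely positive (w.r.t. the degenerate
representation `ι`) bounded linear map `Γ : B(H) → B(H ⊕ H₁)` can be written as
`Γ(B) = Φ(B) − ι(B)K − K*ι(B)` where `Φ(B) = Γ(B) + ι(B)K + K*ι(B)` is completely
positive and satisfies `Φ(|η'⟩⟨η₀|) v = 0` for all `η'`, with `v = η₀ ⊕ w`. -/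
theorem stmt1 {H H₁ : Type*}
    [NormedAddCommGroup H] [InnerProductSpace ℂ H] [CompleteSpace H]
    [NormedAddCommGroup H₁] [InnerProductSpace ℂ H₁] [CompleteSpace H₁]
    (ι : (H →L[ℂ] H) → (WithLp 2 (H × H₁) →L[ℂ] WithLp 2 (H × H₁)))
    (hι : ∀ (B : H →L[ℂ] H) (η : WithLp 2 (H × H₁)),
      ι B η = (WithLp.equiv 2 (H × H₁)).symm (B ((WithLp.equiv 2 (H × H₁)) η).1, 0))
    (Γ : (H →L[ℂ] H) →L[ℂ] (WithLp 2 (H × H₁) →L[ℂ] WithLp 2 (H × H₁)))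
    (hherm : ∀ B : H →L[ℂ] H,
      Γ (ContinuousLinearMap.adjoint B) = ContinuousLinearMap.adjoint (Γ B))
    (hccp : ∀ (n : ℕ) (B : Fin n → H →L[ℂ] H) (ζ : Fin n → WithLp 2 (H × H₁)),
      (∑ k, ι (B k) (ζ k)) = 0 →
      0 ≤ ∑ k, ∑ l, ⟪ζ k, Γ (ContinuousLinearMap.adjoint (B k) * B l) (ζ l)⟫)
    (η₀ : H) (hη₀ : ‖η₀‖ = 1) (w : H₁) :
    ∃ K : WithLp 2 (H × H₁) →L[ℂ] WithLp 2 (H × H₁),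
      (∀ (n : ℕ) (B : Fin n → H →L[ℂ] H) (ζ : Fin n → WithLp 2 (H × H₁)),
        0 ≤ ∑ k, ∑ l, ⟪ζ k,
          (Γ (ContinuousLinearMap.adjoint (B k) * B l)
            + (ι (ContinuousLinearMap.adjoint (B k) * B l)).comp K
            + (ContinuousLinearMap.adjoint K).comp
                (ι (ContinuousLinearMap.adjoint (B k) * B l))) (ζ l)⟫) ∧
      (∀ η' : H,
        (Γ ((innerSL ℂ η₀).smulRight η')
          + (ι ((innerSL ℂ η₀).smulRight η')).comp K
          + (ContinuousLinearMap.adjoint K).comp (ι ((innerSL ℂ η₀).smulRight η')))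
          ((WithLp.equiv 2 (H × H₁)).symm (η₀, w)) = 0) := by
  set V := WithLp.inlL ℂ H H₁
  have hV : adjoint V ∘L V = .id ℂ H := by
    ext
    simp [V]
  obtain rfl : ι = fun B => V ∘L B ∘L adjoint V := by
    ext B η : 2
    rw [hι]
    simp [V]
  have hv : adjoint V ((WithLp.equiv 2 (H × H₁)).symm (η₀, w)) = η₀ := by simp [V]
  refine ⟨correction Γ η₀ _ V, fun n B ζ => ?_,
    perturbed_rankOne_apply_eq_zero η₀ _ hherm hV hv hη₀⟩
  exact le_of_le_of_eq (hccp _ _ _ (sum_compress_cons_rankOne_eq_zero V B ζ hη₀ hv))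
    (cpForm_perturbed_eq_cpForm_cons η₀ _ hherm hV B ζ).symm
end

section
/- Let H be a complex Hilbert space, and for each t > 0 let φₜ : B(H) → B(H) be a completely positive linear map. Suppose λ : B(H) → B(H) is a linear map such that for every B ∈ B(H) and all ζ, ζ' ∈ H one has (1/t)( ⟨ζ, φₜ(B) ζ'⟩ − ⟨ζ, B ζ'⟩ ) → ⟨ζ, λ(B) ζ'⟩ as t → 0⁺. Then: (i) λ is conditionally completely positive, i.e. for every finite family B₁,…,Bₙ ∈ B(H) and ζ₁,…,ζₙ ∈ H with Σₖ Bₖ ζₖ = 0 one has Σₖ,ₗ ⟨ζₖ, λ(Bₖ* Bₗ) ζₗ⟩ ≥ 0; and (ii) if in addition φₜ(I) ≤ I for all t > 0, then λ(I) ≤ 0 (i.e. ⟨η, λ(I) η⟩ ≤ 0 for all η ∈ H). -/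
/-!
`λ` is a limit of the difference quotients `(1/t)(φₜ - id)`, and the relevant quotients have a
sign for every `t > 0`: for a family with `∑ₖ Bₖ ζₖ = 0` the `id` term of the double sum is
`‖∑ₖ Bₖ ζₖ‖² = 0`, so the quotient is `1/t` times a sum that complete positivity makes
nonnegative; for `B = I` the hypothesis `φₜ(I) ≤ I` makes it nonpositive. The partial order on
`ℂ` is closed, so these signs survive the limit `t → 0⁺`.
-/

open ComplexOrder Filter Topology

local notation "⟪" x ", " y "⟫" => @inner ℂ _ _ x y

lemma Complex.one_div_ofReal_nonneg {t : ℝ} (ht : 0 ≤ t) : 0 ≤ 1 / (t : ℂ) := by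
  rw [← Complex.ofReal_one, ← Complex.ofReal_div]
  exact Complex.zero_le_real.mpr (by positivity)

section DifferenceQuotient

variable {f : ℝ → ℂ} {c L : ℂ}

lemma nonneg_of_tendsto_diffQuot_of_le
    (hf : Tendsto (fun t : ℝ => 1 / (t : ℂ) * (f t - c)) (𝓝[>] 0) (𝓝 L))
    (hle : ∀ t > 0, c ≤ f t) : 0 ≤ L := by
  refine ge_of_tendsto hf ?_
  filter_upwards [self_mem_nhdsWithin] with t (ht : 0 < t)
  exact mul_nonneg (Complex.one_div_ofReal_nonneg ht.le) (sub_nonneg.mpr (hle t ht))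

lemma nonpos_of_tendsto_diffQuot_of_le
    (hf : Tendsto (fun t : ℝ => 1 / (t : ℂ) * (f t - c)) (𝓝[>] 0) (𝓝 L))
    (hle : ∀ t > 0, f t ≤ c) : L ≤ 0 := by
  refine le_of_tendsto hf ?_
  filter_upwards [self_mem_nhdsWithin] with t (ht : 0 < t)
  exact mul_nonpos_of_nonneg_of_nonpos (Complex.one_div_ofReal_nonneg ht.le)
    (sub_nonpos.mpr (hle t ht))

end DifferenceQuotient

lemma sum_sum_inner_adjoint_mul_apply {H ι : Type*} [NormedAddCommGroup H]
    [InnerProductSpace ℂ H] [CompleteSpace H] [Fintype ι] (B : ι → H →L[ℂ] H) (ζ : ι → H) :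
    ∑ k, ∑ l, ⟪ζ k, (ContinuousLinearMap.adjoint (B k) * B l) (ζ l)⟫ =
      ⟪∑ k, B k (ζ k), ∑ l, B l (ζ l)⟫ := by
  simp only [mul_apply_eq_comp, ContinuousLinearMap.adjoint_inner_right, sum_inner, inner_sum]
  exact Finset.sum_comm

/-- If `λ` is the pointwise (weak) derivative at `t = 0⁺` of a family of
completely positive maps `φₜ` with `φ₀ = id`, then `λ` is conditionally completely
positive; and if moreover `φₜ(I) ≤ I` for all `t > 0`, then `λ(I) ≤ 0`. -/
theorem stmt3 {H : Type*}
    [NormedAddCommGroup H] [InnerProductSpace ℂ H] [CompleteSpace H]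
    (φ : ℝ → (H →L[ℂ] H) →ₗ[ℂ] (H →L[ℂ] H))
    (hcp : ∀ t : ℝ, 0 < t →
      ∀ (n : ℕ) (B : Fin n → H →L[ℂ] H) (ζ : Fin n → H),
        0 ≤ ∑ k, ∑ l, ⟪ζ k, φ t (ContinuousLinearMap.adjoint (B k) * B l) (ζ l)⟫)
    (lam : (H →L[ℂ] H) →ₗ[ℂ] (H →L[ℂ] H))
    (hder : ∀ (B : H →L[ℂ] H) (ζ ζ' : H),
      Filter.Tendsto (fun t : ℝ => (1 / (t : ℂ)) * (⟪ζ, φ t B ζ'⟫ - ⟪ζ, B ζ'⟫))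
        (nhdsWithin 0 (Set.Ioi 0)) (nhds ⟪ζ, lam B ζ'⟫)) :
    (∀ (n : ℕ) (B : Fin n → H →L[ℂ] H) (ζ : Fin n → H),
      (∑ k, B k (ζ k)) = 0 →
      0 ≤ ∑ k, ∑ l, ⟪ζ k, lam (ContinuousLinearMap.adjoint (B k) * B l) (ζ l)⟫) ∧
    ((∀ t : ℝ, 0 < t → ∀ η : H, ⟪η, φ t 1 η⟫ ≤ ⟪η, η⟫) →
      ∀ η : H, ⟪η, lam 1 η⟫ ≤ 0) := by
  refine ⟨fun n B ζ hζ => ?_, fun hsub η => ?_⟩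
  · have hsum := tendsto_finsetSum Finset.univ fun k _ =>
      tendsto_finsetSum Finset.univ fun l _ =>
        hder (ContinuousLinearMap.adjoint (B k) * B l) (ζ k) (ζ l)
    simp only [← Finset.mul_sum, Finset.sum_sub_distrib, sum_sum_inner_adjoint_mul_apply B ζ,
      hζ, inner_zero_left] at hsum
    exact nonneg_of_tendsto_diffQuot_of_le hsum fun t ht => hcp t ht n B ζ
  · exact nonpos_of_tendsto_diffQuot_of_le (hder 1 η η) fun t ht => hsub t ht η
end
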